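/- Support stability: for every k ∈ {1,…,d}, the k-th coordinate of the Σ-expectile satisfies essInf(X_k) ≤ e_α^Σ(X)_k ≤ essSup(X_k). -/

import Mathlib

/-!
Raising the `k`-th coordinate of a point `x` to some `z ≤ X_k` lowers `(X - x)⁺` by
`(z - x_k) • single k 1` and leaves `(x - X)⁺` unchanged; as `Σ` has nonnegative entries, the
cross terms of the quadratic form are nonnegative, so the loss drops by at least
`α Σ_kk (z - x_k)²`. Hence if `X_k ≥ z > e_k` almost surely, moving `e_k` up to `z` strictly
decreases the expected loss, and a minimiser satisfies `essInf X_k ≤ e_k`. The upper bound is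
the lower one for `(-X, 1 - α)`, whose loss at `-x` is the loss of `(X, α)` at `x`.
-/

open MeasureTheory Matrix

section NonnegMatrix

variable {n : Type*} [Fintype n] {S : Matrix n n ℝ}

theorem mulVec_nonneg_of_nonneg (hS : ∀ i j, 0 ≤ S i j) {v : n → ℝ} (hv : 0 ≤ v) :
    0 ≤ S *ᵥ v :=
  fun i => dotProduct_nonneg_of_nonneg (hS i) hv

theorem dotProduct_mulVec_add_single_ge [DecidableEq n] (hS : ∀ i j, 0 ≤ S i j)
    {u : n → ℝ} (hu : 0 ≤ u) (k : n) {t : ℝ} (ht : 0 ≤ t) :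
    u ⬝ᵥ S *ᵥ u + S k k * t ^ 2 ≤ (u + Pi.single k t) ⬝ᵥ S *ᵥ (u + Pi.single k t) := by
  have hsingle : (0 : n → ℝ) ≤ Pi.single k t := Pi.single_nonneg.mpr ht
  have hdiag : Pi.single k t ⬝ᵥ S *ᵥ Pi.single k t = S k k * t ^ 2 := by
    rw [mulVec_single, single_dotProduct]
    simp only [op_smul_eq_mul, Pi.smul_apply, col_apply]
    ring
  have hcross₁ := dotProduct_nonneg_of_nonneg hu (mulVec_nonneg_of_nonneg hS hsingle)
  have hcross₂ := dotProduct_nonneg_of_nonneg hsingle (mulVec_nonneg_of_nonneg hS hu)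
  rw [add_dotProduct, mulVec_add, dotProduct_add, dotProduct_add, hdiag]
  linarith

end NonnegMatrix

theorem memLp_two_of_integrable_abs_mul_self {Ω : Type*} [MeasurableSpace Ω] {μ : Measure Ω}
    {f : Ω → ℝ} (hf : AEStronglyMeasurable f μ) (hint : Integrable (fun ω => |f ω * f ω|) μ) :
    MemLp f 2 μ :=
  (memLp_two_iff_integrable_sq hf).mpr <| by
    simpa only [abs_mul_self, sq] using hint

theorem integrable_dotProduct_mulVec {Ω n : Type*} [Fintype n] [MeasurableSpace Ω]
    {μ : Measure Ω} (S : Matrix n n ℝ) {Y : Ω → n → ℝ}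
    (hY : ∀ i, MemLp (fun ω => Y ω i) 2 μ) :
    Integrable (fun ω => Y ω ⬝ᵥ S *ᵥ Y ω) μ := by
  simp only [dotProduct, mulVec, Finset.mul_sum]
  refine integrable_finsetSum _ fun i _ => integrable_finsetSum _ fun j _ => ?_
  have hprod : Integrable (fun ω => Y ω i * Y ω j) μ := (hY i).integrable_mul (hY j)
  simpa only [mul_left_comm] using hprod.const_mul (S i j)

def sigmaLoss {n : Type*} [Fintype n] (S : Matrix n n ℝ) (α : ℝ) (y x : n → ℝ) : ℝ :=
  α * ((y - x)⁺ ⬝ᵥ S *ᵥ (y - x)⁺) + (1 - α) * ((x - y)⁺ ⬝ᵥ S *ᵥ (x - y)⁺)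

section SigmaLoss

variable {n : Type*} [Fintype n] {S : Matrix n n ℝ} {α : ℝ}

theorem sigmaLoss_one_sub_neg (y x : n → ℝ) :
    sigmaLoss S (1 - α) (-y) x = sigmaLoss S α y (-x) := by
  rw [sigmaLoss, sigmaLoss, sub_neg_eq_add, sub_neg_eq_add, add_comm x, neg_sub_comm]
  ring

theorem sigmaLoss_update_add_le [DecidableEq n] (hS : ∀ i j, 0 ≤ S i j) (hα : 0 ≤ α)
    {y x : n → ℝ} {k : n} {z : ℝ} (hxz : x k ≤ z) (hzy : z ≤ y k) :
    sigmaLoss S α y (Function.update x k z) + α * (S k k * (z - x k) ^ 2) ≤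
      sigmaLoss S α y x := by
  set x' := Function.update x k z
  have hbelow : (x' - y)⁺ = (x - y)⁺ := by
    ext j
    rcases eq_or_ne j k with rfl | hj
    · simp only [x', Pi.sub_apply, Pi.posPart_apply, Function.update_self]
      rw [posPart_eq_zero.mpr (by linarith), posPart_eq_zero.mpr (by linarith)]
    · simp [x', hj]
  have habove : (y - x)⁺ = (y - x')⁺ + Pi.single k (z - x k) := by
    ext j
    rcases eq_or_ne j k with rfl | hj
    · simp only [x', Pi.add_apply, Pi.sub_apply, Pi.posPart_apply, Function.update_self,
        Pi.single_eq_same]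
      rw [posPart_eq_self.mpr (by linarith), posPart_eq_self.mpr (by linarith)]
      ring
    · simp [x', hj]
  have hquad :=
    dotProduct_mulVec_add_single_ge hS (posPart_nonneg (y - x')) k (sub_nonneg.mpr hxz)
  rw [sigmaLoss, sigmaLoss, hbelow, habove]
  linarith [mul_le_mul_of_nonneg_left hquad hα]

end SigmaLoss

section Expectile

variable {Ω n : Type*} [Fintype n] [MeasurableSpace Ω] {μ : Measure Ω}
  {S : Matrix n n ℝ} {α : ℝ} {X : Ω → n → ℝ}

theorem integrable_sigmaLoss [IsFiniteMeasure μ] (hX : ∀ i, MemLp (fun ω => X ω i) 2 μ)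
    (x : n → ℝ) : Integrable (fun ω => sigmaLoss S α (X ω) x) μ := by
  have habove : ∀ i, MemLp (fun ω => (X ω - x)⁺ i) 2 μ := fun i =>
    ((hX i).sub (memLp_const (x i))).pos_part
  have hbelow : ∀ i, MemLp (fun ω => (x - X ω)⁺ i) 2 μ := fun i =>
    ((memLp_const (x i)).sub (hX i)).pos_part
  exact ((integrable_dotProduct_mulVec S habove).const_mul α).add
    ((integrable_dotProduct_mulVec S hbelow).const_mul (1 - α))

theorem le_apply_of_isMinOn_of_ae_le [IsProbabilityMeasure μ] [DecidableEq n]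
    (hS : ∀ i j, 0 ≤ S i j) {k : n} (hSk : 0 < S k k) (hα : 0 < α)
    (hX : ∀ i, MemLp (fun ω => X ω i) 2 μ) {e : n → ℝ}
    (he : IsMinOn (fun x => ∫ ω, sigmaLoss S α (X ω) x ∂μ) Set.univ e) {c : ℝ}
    (hc : ∀ᵐ ω ∂μ, c ≤ X ω k) : c ≤ e k := by
  by_contra! hlt
  set e' := Function.update e k c
  set δ := α * (S k k * (c - e k) ^ 2)
  have hδ : 0 < δ := by have := sub_pos.mpr hlt; positivity
  have hpointwise : ∀ᵐ ω ∂μ, sigmaLoss S α (X ω) e' + δ ≤ sigmaLoss S α (X ω) e := by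
    filter_upwards [hc] with ω hω
    exact sigmaLoss_update_add_le hS hα.le hlt.le hω
  have hintegral :=
    calc ∫ ω, sigmaLoss S α (X ω) e' ∂μ + δ = ∫ ω, (sigmaLoss S α (X ω) e' + δ) ∂μ := by
          rw [integral_add (integrable_sigmaLoss hX e') (integrable_const δ), integral_const,
            probReal_univ, one_smul]
      _ ≤ ∫ ω, sigmaLoss S α (X ω) e ∂μ :=
          integral_mono_ae ((integrable_sigmaLoss hX e').add (integrable_const δ))
            (integrable_sigmaLoss hX e) hpointwise
  linarith [isMinOn_iff.mp he e' (Set.mem_univ e')]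

theorem apply_le_of_isMinOn_of_ae_le [IsProbabilityMeasure μ] [DecidableEq n]
    (hS : ∀ i j, 0 ≤ S i j) {k : n} (hSk : 0 < S k k) (hα : α < 1)
    (hX : ∀ i, MemLp (fun ω => X ω i) 2 μ) {e : n → ℝ}
    (he : IsMinOn (fun x => ∫ ω, sigmaLoss S α (X ω) x ∂μ) Set.univ e) {c : ℝ}
    (hc : ∀ᵐ ω ∂μ, X ω k ≤ c) : e k ≤ c := by
  have he_neg : IsMinOn (fun x => ∫ ω, sigmaLoss S (1 - α) (-X ω) x ∂μ) Set.univ (-e) := by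
    refine isMinOn_univ_iff.mpr fun x => ?_
    simpa only [sigmaLoss_one_sub_neg, neg_neg] using isMinOn_univ_iff.mp he (-x)
  have := le_apply_of_isMinOn_of_ae_le (X := -X) hS hSk (sub_pos.mpr hα)
    (fun i => (hX i).neg) he_neg (c := -c) (hc.mono fun ω hω => neg_le_neg hω)
  simpa using this

end Expectile

section EssBounds

variable {Ω : Type*} [MeasurableSpace Ω] {μ : Measure Ω} {f : Ω → ℝ} {a : ℝ}

theorem essInf_coe_le_of_forall_ae_le (h : ∀ c : ℝ, (∀ᵐ ω ∂μ, c ≤ f ω) → c ≤ a) :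
    essInf (fun ω => (f ω : EReal)) μ ≤ a := by
  by_contra! hlt
  obtain ⟨z, haz, hz⟩ := EReal.exists_between_coe_real hlt
  have hae : ∀ᵐ ω ∂μ, z ≤ f ω := by
    filter_upwards [ae_lt_of_lt_essInf hz] with ω hω
    exact_mod_cast hω.le
  exact (h z hae).not_gt (mod_cast haz)

theorem le_essSup_coe_of_forall_ae_le (h : ∀ c : ℝ, (∀ᵐ ω ∂μ, f ω ≤ c) → a ≤ c) :
    (a : EReal) ≤ essSup (fun ω => (f ω : EReal)) μ := by
  by_contra! hlt
  obtain ⟨z, hz, hza⟩ := EReal.exists_between_coe_real hlt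
  have hae : ∀ᵐ ω ∂μ, f ω ≤ z := by
    filter_upwards [ae_lt_of_essSup_lt hz] with ω hω
    exact_mod_cast hω.le
  exact (h z hae).not_gt (mod_cast hza)

end EssBounds

theorem sigma_expectile_support_stability_general
    {Ω : Type*} [MeasurableSpace Ω] (μ : Measure Ω) [IsProbabilityMeasure μ]
    {d : ℕ} (S : Matrix (Fin d) (Fin d) ℝ) (hpos : ∀ i j, 0 < S i j)
    (X : Ω → Fin d → ℝ) (hm : Measurable X)
    (hint : ∀ i j, Integrable (fun ω => |X ω i * X ω j|) μ)
    (α : ℝ) (hα : α ∈ Set.Ioo (0:ℝ) 1)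
    (e : Fin d → ℝ)
    (he : IsMinOn
      (fun x : Fin d → ℝ => ∫ ω,
        α * ((fun k => max (X ω k - x k) 0) ⬝ᵥ S.mulVec (fun k => max (X ω k - x k) 0))
        + (1-α) * ((fun k => max (x k - X ω k) 0) ⬝ᵥ
              S.mulVec (fun k => max (x k - X ω k) 0)) ∂μ)
      Set.univ e) :
    ∀ k, essInf (fun ω => (X ω k : EReal)) μ ≤ (e k : EReal) ∧
         (e k : EReal) ≤ essSup (fun ω => (X ω k : EReal)) μ := by
  have hX : ∀ i, MemLp (fun ω => X ω i) 2 μ := fun i =>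
    memLp_two_of_integrable_abs_mul_self
      ((measurable_pi_apply i).comp hm).aestronglyMeasurable (hint i i)
  have he' : IsMinOn (fun x => ∫ ω, sigmaLoss S α (X ω) x ∂μ) Set.univ e := he
  have hS : ∀ i j, 0 ≤ S i j := fun i j => (hpos i j).le
  exact fun k =>
    ⟨essInf_coe_le_of_forall_ae_le fun c hc =>
        le_apply_of_isMinOn_of_ae_le hS (hpos k k) hα.1 hX he' hc,
      le_essSup_coe_of_forall_ae_le fun c hc =>
        apply_le_of_isMinOn_of_ae_le hS (hpos k k) hα.2 hX he' hc⟩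

theorem sigma_expectile_support_stability
    {Ω : Type*} [MeasurableSpace Ω] (μ : Measure Ω) [IsProbabilityMeasure μ]
    {d : ℕ} (S : Matrix (Fin d) (Fin d) ℝ) (hS : S.PosDef) (hpos : ∀ i j, 0 < S i j)
    (X : Ω → Fin d → ℝ) (hm : Measurable X)
    (hint : ∀ i j, Integrable (fun ω => |X ω i * X ω j|) μ)
    (α : ℝ) (hα : α ∈ Set.Ioo (0:ℝ) 1)
    (e : Fin d → ℝ)
    (he : IsMinOn
      (fun x : Fin d → ℝ => ∫ ω,
        α * ((fun k => max (X ω k - x k) 0) ⬝ᵥ S.mulVec (fun k => max (X ω k - x k) 0))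
        + (1-α) * ((fun k => max (x k - X ω k) 0) ⬝ᵥ
              S.mulVec (fun k => max (x k - X ω k) 0)) ∂μ)
      Set.univ e) :
    ∀ k, essInf (fun ω => (X ω k : EReal)) μ ≤ (e k : EReal) ∧
         (e k : EReal) ≤ essSup (fun ω => (X ω k : EReal)) μ :=
  sigma_expectile_support_stability_general μ S hpos X hm hint α hα e he
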